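/- Let G=(V,E) be a connected locally finite graph with μ(x) ≥ μ_min > 0, let a:V→[0,∞) with a(x) → +∞ as d(x,x₀) → ∞ for some fixed x₀, and let λ > 1. If {u_k} is a sequence bounded in the norm ‖u‖²_{E_λ} = ∫_V(|Δu|²+|∇u|²+(λa+1)u²)dμ, then up to a subsequence there exists u with u_k → u in L^q(V) for every q ∈ [2,∞] and u_k(x) → u(x) for every x ∈ V. -/

import Mathlib

/-!
The bound `‖u_k‖_{E_λ}² ≤ B` together with `μ ≥ μ_min` makes the `u_k` uniformly bounded.
Balls of a connected locally finite graph are finite, so `V` is countable and by Tychonoff a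
subsequence converges pointwise to some `w`, which lies in `E_λ` by Fatou's lemma. Outside the
finite set `{λ a + 1 < M}` the `ℓ²(μ)`-mass of `u_k - w` is at most `4B / M`, which gives `ℓ²`
convergence; `ℓ^∞` convergence follows from `μ_min |v(x)|² ≤ ‖v‖²_{ℓ²(μ)}` and `ℓ^q` convergence
from `|v|^q ≤ ‖v‖_∞^{q-2} |v|²`.
-/

open Filter Topology

structure GraphData (V : Type*) where
  ω : V → V → ℝ
  μ : V → ℝ
  sym : ∀ x y, ω x y = ω y x
  nonneg : ∀ x y, 0 ≤ ω x y
  loopless : ∀ x, ω x x = 0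
  locfin : ∀ x, {y | ω x y ≠ 0}.Finite
  μpos : ∀ x, 0 < μ x

variable {V : Type*}

noncomputable def GraphData.lap (g : GraphData V) (u : V → ℝ) (x : V) : ℝ :=
  (1 / g.μ x) * ∑' y, g.ω x y * (u y - u x)

noncomputable def GraphData.grad (g : GraphData V) (u v : V → ℝ) (x : V) : ℝ :=
  (1 / (2 * g.μ x)) * ∑' y, g.ω x y * (u y - u x) * (v y - v x)

noncomputable def GraphData.integral (g : GraphData V) (f : V → ℝ) : ℝ :=
  ∑' x, g.μ x * f x

def GraphData.G (g : GraphData V) : SimpleGraph V where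
  Adj x y := 0 < g.ω x y
  symm := ⟨fun x y (h : 0 < g.ω x y) => by show 0 < g.ω y x; rwa [g.sym y x]⟩
  loopless := ⟨fun x (h : 0 < g.ω x x) => by simp [g.loopless x] at h⟩

noncomputable def GraphData.enormSq (g : GraphData V) (a : V → ℝ) (lam : ℝ) (u : V → ℝ) : ℝ :=
  ∑' x, g.μ x * ((g.lap u x) ^ 2 + g.grad u u x + (lam * a x + 1) * (u x) ^ 2)

def GraphData.memE (g : GraphData V) (a : V → ℝ) (lam : ℝ) (u : V → ℝ) : Prop :=
  Summable fun x => g.μ x * ((g.lap u x) ^ 2 + g.grad u u x + (lam * a x + 1) * (u x) ^ 2)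

noncomputable def GraphData.lpInt (g : GraphData V) (p : ℝ) (u : V → ℝ) : ℝ :=
  ∑' x, g.μ x * |u x| ^ p

noncomputable def GraphData.Jlam (g : GraphData V) (a : V → ℝ) (lam p : ℝ) (u : V → ℝ) : ℝ :=
  (1 / 2) * g.enormSq a lam u - (1 / p) * g.lpInt p u

def GraphData.Nehari (g : GraphData V) (a : V → ℝ) (lam p : ℝ) : Set (V → ℝ) :=
  {u | u ≠ 0 ∧ g.memE a lam u ∧ g.enormSq a lam u = g.lpInt p u}

noncomputable def GraphData.Jderiv (g : GraphData V) (a : V → ℝ) (lam p : ℝ) (u φ : V → ℝ) : ℝ :=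
  (∑' x, g.μ x * (g.lap u x * g.lap φ x + g.grad u φ x + (lam * a x + 1) * u x * φ x))
    - ∑' x, g.μ x * (|u x| ^ (p - 2) * u x * φ x)

def GraphData.bdry (g : GraphData V) (Ω : Set V) : Set V :=
  {y | y ∉ Ω ∧ ∃ x ∈ Ω, 0 < g.ω x y}

noncomputable def GraphData.hnormSq (g : GraphData V) (Ω : Set V) (u : V → ℝ) : ℝ :=
  (∑' x : ↥(Ω ∪ g.bdry Ω), g.μ x * ((g.lap u x) ^ 2 + g.grad u u x))
    + ∑' x : Ω, g.μ x * (u x) ^ 2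

noncomputable def GraphData.lpIntO (g : GraphData V) (Ω : Set V) (p : ℝ) (u : V → ℝ) : ℝ :=
  ∑' x : Ω, g.μ x * |u x| ^ p

noncomputable def GraphData.JOmega (g : GraphData V) (Ω : Set V) (p : ℝ) (u : V → ℝ) : ℝ :=
  (1 / 2) * g.hnormSq Ω u - (1 / p) * g.lpIntO Ω p u

def GraphData.memH (g : GraphData V) (Ω : Set V) (u : V → ℝ) : Prop :=
  ∀ x ∉ Ω, u x = 0

def GraphData.NehariO (g : GraphData V) (Ω : Set V) (p : ℝ) : Set (V → ℝ) :=
  {u | u ≠ 0 ∧ g.memH Ω u ∧ g.hnormSq Ω u = g.lpIntO Ω p u}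

noncomputable def GraphData.JderivO (g : GraphData V) (Ω : Set V) (p : ℝ) (u φ : V → ℝ) : ℝ :=
  (∑' x : ↥(Ω ∪ g.bdry Ω), g.μ x * (g.lap u x * g.lap φ x + g.grad u φ x))
    + (∑' x : Ω, g.μ x * (u x * φ x))
    - ∑' x : Ω, g.μ x * (|u x| ^ (p - 2) * u x * φ x)

section WeightedSums

variable {ι : Type*}

theorem sum_le_of_tendsto_of_tsum_le {κ : Type*} {l : Filter κ} [l.NeBot] {f : κ → ι → ℝ}
    {F : ι → ℝ} {B : ℝ} (hf : ∀ i x, 0 ≤ f i x) (hs : ∀ i, Summable (f i))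
    (hB : ∀ i, ∑' x, f i x ≤ B) (hlim : ∀ x, Tendsto (fun i => f i x) l (𝓝 (F x)))
    (s : Finset ι) : ∑ x ∈ s, F x ≤ B :=
  le_of_tendsto (tendsto_finsetSum s fun x _ => hlim x) <| Eventually.of_forall fun i =>
    ((hs i).sum_le_tsum s fun x _ => hf i x).trans (hB i)

theorem tendsto_tsum_mul_sq_zero_of_tendsto_cofinite_atTop {ρ c : ι → ℝ} {f : ℕ → ι → ℝ}
    {B : ℝ} (hρ : ∀ x, 0 ≤ ρ x) (hc : Tendsto c cofinite atTop)
    (hB : ∀ k (s : Finset ι), ∑ x ∈ s, ρ x * (c x * f k x ^ 2) ≤ B)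
    (hf : ∀ x, Tendsto (fun k => f k x) atTop (𝓝 0)) :
    Tendsto (fun k => ∑' x, ρ x * f k x ^ 2) atTop (𝓝 0) := by
  classical
  have hB0 : 0 ≤ B := by simpa using hB 0 ∅
  refine tendsto_order.2 ⟨fun b hb => Eventually.of_forall fun k =>
    hb.trans_le (tsum_nonneg fun x => mul_nonneg (hρ x) (sq_nonneg _)), fun ε hε => ?_⟩
  set M := 2 * (B + 1) / ε
  have hM : 0 < M := by positivity
  have hBM : B / M ≤ ε / 2 := by
    have hεM : ε / 2 * M = B + 1 := by
      simp only [M]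
      field_simp
    rw [div_le_iff₀ hM, hεM]
    linarith
  have hS : {x | ¬M ≤ c x}.Finite := eventually_cofinite.1 (hc.eventually_ge_atTop M)
  set S := hS.toFinset
  have htail : ∀ k, ∑' x, ρ x * f k x ^ 2 ≤ ∑ x ∈ S, ρ x * f k x ^ 2 + B / M := by
    intro k
    refine tsum_le_of_sum_le' (add_nonneg (Finset.sum_nonneg fun x _ =>
      mul_nonneg (hρ x) (sq_nonneg _)) (by positivity)) fun s => ?_
    rw [← Finset.sum_filter_add_sum_filter_not s (· ∈ S)]
    gcongr ?_ + ?_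
    · exact Finset.sum_le_sum_of_subset_of_nonneg (fun x hx => (Finset.mem_filter.1 hx).2)
        fun x _ _ => mul_nonneg (hρ x) (sq_nonneg _)
    · calc ∑ x ∈ s with x ∉ S, ρ x * f k x ^ 2
          ≤ ∑ x ∈ s with x ∉ S, ρ x * (c x * f k x ^ 2) / M := by
            refine Finset.sum_le_sum fun x hx => ?_
            have hcx : M ≤ c x := by simpa [S] using (Finset.mem_filter.1 hx).2
            rw [le_div_iff₀ hM]
            nlinarith [mul_nonneg (hρ x) (sq_nonneg (f k x))]
        _ ≤ B / M := by
            rw [← Finset.sum_div]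
            gcongr
            exact hB k _
  have hhead : Tendsto (fun k => ∑ x ∈ S, ρ x * f k x ^ 2) atTop (𝓝 0) := by
    simpa using tendsto_finsetSum S fun x _ => ((hf x).pow 2).const_mul (ρ x)
  filter_upwards [hhead.eventually (gt_mem_nhds (half_pos hε))] with k hk
  calc ∑' x, ρ x * f k x ^ 2 ≤ ∑ x ∈ S, ρ x * f k x ^ 2 + B / M := htail k
    _ < ε / 2 + ε / 2 := add_lt_add_of_lt_of_le hk hBM
    _ = ε := add_halves ε

theorem abs_le_sqrt_div_of_mul_sq_le {m ρ t S : ℝ} (hm : 0 < m) (hρ : m ≤ ρ)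
    (h : ρ * t ^ 2 ≤ S) : |t| ≤ √(S / m) :=
  Real.abs_le_sqrt <| (le_div_iff₀ hm).2 <| by nlinarith [sq_nonneg t]

theorem tendsto_iSup_abs_zero_of_tendsto_tsum_mul_sq {ρ : ι → ℝ} {f : ℕ → ι → ℝ} {m : ℝ}
    (hm : 0 < m) (hρ : ∀ x, m ≤ ρ x) (hs : ∀ k, Summable fun x => ρ x * f k x ^ 2)
    (h : Tendsto (fun k => ∑' x, ρ x * f k x ^ 2) atTop (𝓝 0)) :
    Tendsto (fun k => ⨆ x, |f k x|) atTop (𝓝 0) := by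
  have hsqrt : Tendsto (fun k => √((∑' x, ρ x * f k x ^ 2) / m)) atTop (𝓝 0) := by
    simpa using (h.div_const m).sqrt
  refine squeeze_zero (fun k => Real.iSup_nonneg fun x => abs_nonneg _)
    (fun k => Real.iSup_le (fun x => ?_) (Real.sqrt_nonneg _)) hsqrt
  exact abs_le_sqrt_div_of_mul_sq_le hm (hρ x)
    ((hs k).le_tsum x fun y _ => mul_nonneg (hm.le.trans (hρ y)) (sq_nonneg _))

theorem abs_rpow_le_rpow_sub_two_mul_sq {t K q : ℝ} (ht : |t| ≤ K) (hq : 2 ≤ q) :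
    |t| ^ q ≤ K ^ (q - 2) * t ^ 2 :=
  calc |t| ^ q = |t| ^ (q - 2) * |t| ^ (2 : ℝ) := by
        rw [← Real.rpow_add' (abs_nonneg t) (by linarith), sub_add_cancel]
    _ ≤ K ^ (q - 2) * t ^ 2 := by
        rw [Real.rpow_two, sq_abs]
        gcongr

theorem tendsto_tsum_mul_abs_rpow_zero_of_tendsto_tsum_mul_sq {ρ : ι → ℝ} {f : ℕ → ι → ℝ}
    {K q : ℝ} (hρ : ∀ x, 0 ≤ ρ x) (hK : ∀ k x, |f k x| ≤ K) (hq : 2 ≤ q)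
    (hs : ∀ k, Summable fun x => ρ x * f k x ^ 2)
    (h : Tendsto (fun k => ∑' x, ρ x * f k x ^ 2) atTop (𝓝 0)) :
    Tendsto (fun k => ∑' x, ρ x * |f k x| ^ q) atTop (𝓝 0) := by
  have hterm : ∀ k x, ρ x * |f k x| ^ q ≤ K ^ (q - 2) * (ρ x * f k x ^ 2) := fun k x =>
    calc ρ x * |f k x| ^ q ≤ ρ x * (K ^ (q - 2) * f k x ^ 2) :=
          mul_le_mul_of_nonneg_left (abs_rpow_le_rpow_sub_two_mul_sq (hK k x) hq) (hρ x)
      _ = K ^ (q - 2) * (ρ x * f k x ^ 2) := by ring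
  have hnonneg : ∀ k x, 0 ≤ ρ x * |f k x| ^ q := fun k x =>
    mul_nonneg (hρ x) (Real.rpow_nonneg (abs_nonneg _) q)
  refine squeeze_zero (fun k => tsum_nonneg (hnonneg k)) (fun k => ?_)
    (by simpa using h.const_mul (K ^ (q - 2)))
  rw [← tsum_mul_left]
  exact ((hs k).mul_left _).of_nonneg_of_le (hnonneg k) (hterm k) |>.tsum_le_tsum (hterm k)
    ((hs k).mul_left _)

end WeightedSums

namespace SimpleGraph

variable {W : Type*} {G : SimpleGraph W}

theorem Connected.finite_setOf_dist_le (hconn : G.Connected)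
    (hfin : ∀ x, (G.neighborSet x).Finite) (x₀ : W) (n : ℕ) :
    {x | G.dist x x₀ ≤ n}.Finite := by
  induction n with
  | zero => simp [hconn.dist_eq_zero_iff]
  | succ n ih =>
    refine (ih.union (ih.biUnion fun y _ => hfin y)).subset fun x (hx : G.dist x x₀ ≤ n + 1) => ?_
    rcases Nat.lt_or_ge n (G.dist x x₀) with hlt | hle
    · obtain ⟨p, hp⟩ := hconn.exists_walk_length_eq_dist x x₀
      cases p with
      | nil => simp at hlt
      | @cons _ y _ hadj q =>
        have hq : G.dist y x₀ ≤ n := by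
          have := G.dist_le q
          simp only [Walk.length_cons] at hp
          omega
        exact Or.inr (Set.mem_biUnion hq hadj.symm)
    · exact Or.inl hle

theorem Connected.countable (hconn : G.Connected) (hfin : ∀ x, (G.neighborSet x).Finite)
    (x₀ : W) : Countable W :=
  Set.countable_univ_iff.1 <| (Set.countable_iUnion fun n : ℕ =>
    (hconn.finite_setOf_dist_le hfin x₀ n).countable).mono fun x _ =>
      Set.mem_iUnion.2 ⟨G.dist x x₀, (le_refl (G.dist x x₀) :)⟩

theorem Connected.tendsto_cofinite_atTop (hconn : G.Connected)
    (hfin : ∀ x, (G.neighborSet x).Finite) (x₀ : W) {f : W → ℝ}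
    (hf : ∀ M : ℝ, ∃ R : ℕ, ∀ x, R ≤ G.dist x x₀ → M ≤ f x) :
    Tendsto f cofinite atTop := by
  refine tendsto_atTop.2 fun M => eventually_cofinite.2 ?_
  obtain ⟨R, hR⟩ := hf M
  exact (hconn.finite_setOf_dist_le hfin x₀ R).subset fun x hx =>
    (not_le.1 (mt (hR x) hx)).le

end SimpleGraph

namespace GraphData

variable (g : GraphData V)

theorem finite_neighborSet (x : V) : (g.G.neighborSet x).Finite :=
  (g.locfin x).subset fun _ hy => (ne_of_gt hy)

theorem tsum_ω_mul_eq_sum (x : V) (F : V → ℝ) :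
    ∑' y, g.ω x y * F y = ∑ y ∈ (g.locfin x).toFinset, g.ω x y * F y :=
  tsum_eq_sum fun y hy => by
    have hω : g.ω x y = 0 := by simpa using hy
    rw [hω, zero_mul]

theorem continuous_lap_apply (x : V) : Continuous fun u : V → ℝ => g.lap u x := by
  simp only [lap, tsum_ω_mul_eq_sum]
  fun_prop

theorem continuous_grad_apply (x : V) : Continuous fun u : V → ℝ => g.grad u u x := by
  simp only [grad, mul_assoc, tsum_ω_mul_eq_sum]
  fun_prop

theorem grad_self_nonneg (u : V → ℝ) (x : V) : 0 ≤ g.grad u u x :=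
  mul_nonneg (by have := g.μpos x; positivity) <| tsum_nonneg fun y => by
    rw [mul_assoc]
    exact mul_nonneg (g.nonneg x y) (mul_self_nonneg _)

/-- The summand of `enormSq`: `memE` is its summability and `enormSq` its sum. -/
noncomputable def energyDensity (a : V → ℝ) (lam : ℝ) (u : V → ℝ) (x : V) : ℝ :=
  g.μ x * ((g.lap u x) ^ 2 + g.grad u u x + (lam * a x + 1) * (u x) ^ 2)

theorem continuous_energyDensity_apply (a : V → ℝ) (lam : ℝ) (x : V) :
    Continuous fun u : V → ℝ => g.energyDensity a lam u x := by
  have := g.continuous_lap_apply x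
  have := g.continuous_grad_apply x
  unfold energyDensity
  fun_prop

theorem mul_mul_sq_le_energyDensity (a : V → ℝ) (lam : ℝ) (u : V → ℝ) (x : V) :
    g.μ x * ((lam * a x + 1) * u x ^ 2) ≤ g.energyDensity a lam u x := by
  have := g.grad_self_nonneg u x
  unfold energyDensity
  gcongr
  · exact (g.μpos x).le
  · nlinarith [sq_nonneg (g.lap u x)]

variable {a : V → ℝ} {lam : ℝ}

theorem mul_sq_le_mul_mul_sq (hlam : 0 ≤ lam) (ha : ∀ x, 0 ≤ a x) (t : ℝ) (x : V) :
    g.μ x * t ^ 2 ≤ g.μ x * ((lam * a x + 1) * t ^ 2) := by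
  have := g.μpos x
  have := mul_nonneg (mul_nonneg hlam (ha x)) (sq_nonneg t)
  nlinarith

theorem energyDensity_nonneg (hlam : 0 ≤ lam) (ha : ∀ x, 0 ≤ a x) (u : V → ℝ) (x : V) :
    0 ≤ g.energyDensity a lam u x :=
  (mul_nonneg (g.μpos x).le (sq_nonneg _)).trans <|
    (g.mul_sq_le_mul_mul_sq hlam ha _ x).trans (g.mul_mul_sq_le_energyDensity a lam u x)

theorem mul_mul_sq_sub_le_energyDensity (hlam : 0 ≤ lam) (ha : ∀ x, 0 ≤ a x) (u v : V → ℝ)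
    (x : V) : g.μ x * ((lam * a x + 1) * (u x - v x) ^ 2) ≤
      2 * g.energyDensity a lam u x + 2 * g.energyDensity a lam v x := by
  refine le_trans ?_ (add_le_add (mul_le_mul_of_nonneg_left
    (g.mul_mul_sq_le_energyDensity a lam u x) zero_le_two) (mul_le_mul_of_nonneg_left
    (g.mul_mul_sq_le_energyDensity a lam v x) zero_le_two))
  have hc : 0 ≤ g.μ x * (lam * a x + 1) :=
    mul_nonneg (g.μpos x).le (by nlinarith [mul_nonneg hlam (ha x)])
  nlinarith [mul_nonneg hc (sq_nonneg (u x + v x))]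

theorem sum_energyDensity_le_enormSq (hlam : 0 ≤ lam) (ha : ∀ x, 0 ≤ a x) {u : V → ℝ}
    (hu : g.memE a lam u) (s : Finset V) :
    ∑ x ∈ s, g.energyDensity a lam u x ≤ g.enormSq a lam u :=
  Summable.sum_le_tsum s (fun x _ => g.energyDensity_nonneg hlam ha u x) hu

theorem abs_le_sqrt_div_of_enormSq_le {μmin B : ℝ} (hμmin : 0 < μmin) (hμ : ∀ x, μmin ≤ g.μ x)
    (hlam : 0 ≤ lam) (ha : ∀ x, 0 ≤ a x) {u : V → ℝ} (hu : g.memE a lam u)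
    (hB : g.enormSq a lam u ≤ B) (x : V) : |u x| ≤ √(B / μmin) :=
  abs_le_sqrt_div_of_mul_sq_le hμmin (hμ x) <| calc
    g.μ x * u x ^ 2 ≤ g.μ x * ((lam * a x + 1) * u x ^ 2) := g.mul_sq_le_mul_mul_sq hlam ha _ x
    _ ≤ g.energyDensity a lam u x := g.mul_mul_sq_le_energyDensity a lam u x
    _ ≤ B := by simpa using (g.sum_energyDensity_le_enormSq hlam ha hu {x}).trans hB

theorem sum_energyDensity_le_of_tendsto {κ : Type*} {l : Filter κ} [l.NeBot] (hlam : 0 ≤ lam)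
    (ha : ∀ x, 0 ≤ a x) {u : κ → V → ℝ} {w : V → ℝ} {B : ℝ} (hu : ∀ i, g.memE a lam (u i))
    (hB : ∀ i, g.enormSq a lam (u i) ≤ B) (hw : Tendsto u l (𝓝 w)) (s : Finset V) :
    ∑ x ∈ s, g.energyDensity a lam w x ≤ B :=
  sum_le_of_tendsto_of_tsum_le (fun i => g.energyDensity_nonneg hlam ha (u i)) hu hB
    (fun x => ((g.continuous_energyDensity_apply a lam x).tendsto w).comp hw) s

theorem summable_mul_sq_sub (hlam : 0 ≤ lam) (ha : ∀ x, 0 ≤ a x) {u v : V → ℝ}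
    (hu : g.memE a lam u) (hv : g.memE a lam v) :
    Summable fun x => g.μ x * (u x - v x) ^ 2 :=
  ((Summable.mul_left 2 hu).add (Summable.mul_left 2 hv)).of_nonneg_of_le
    (fun x => mul_nonneg (g.μpos x).le (sq_nonneg _)) fun x =>
      (g.mul_sq_le_mul_mul_sq hlam ha _ x).trans (g.mul_mul_sq_sub_le_energyDensity hlam ha u v x)

theorem tendsto_tsum_mul_sq_sub_zero (hlam : 0 < lam) (ha : ∀ x, 0 ≤ a x)
    (hcoer : Tendsto a cofinite atTop) {u : ℕ → V → ℝ} {w : V → ℝ} {B : ℝ}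
    (hu : ∀ k, g.memE a lam (u k)) (hB : ∀ k, g.enormSq a lam (u k) ≤ B)
    (hw : ∀ s, ∑ x ∈ s, g.energyDensity a lam w x ≤ B)
    (hpt : ∀ x, Tendsto (fun k => u k x) atTop (𝓝 (w x))) :
    Tendsto (fun k => ∑' x, g.μ x * (u k x - w x) ^ 2) atTop (𝓝 0) := by
  refine tendsto_tsum_mul_sq_zero_of_tendsto_cofinite_atTop (B := 4 * B)
    (fun x => (g.μpos x).le) (tendsto_atTop_add_const_right _ 1 (hcoer.const_mul_atTop hlam))
    (fun k s => ?_) fun x => by simpa using (hpt x).sub_const (w x)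
  calc ∑ x ∈ s, g.μ x * ((lam * a x + 1) * (u k x - w x) ^ 2)
      ≤ ∑ x ∈ s, (2 * g.energyDensity a lam (u k) x + 2 * g.energyDensity a lam w x) :=
        Finset.sum_le_sum fun x _ => g.mul_mul_sq_sub_le_energyDensity hlam.le ha _ _ x
    _ ≤ 2 * B + 2 * B := by
        rw [Finset.sum_add_distrib, ← Finset.mul_sum, ← Finset.mul_sum]
        gcongr
        exacts [(g.sum_energyDensity_le_enormSq hlam.le ha (hu k) s).trans (hB k), hw s]
    _ = 4 * B := by ring

end GraphData

theorem stmt4_general (g : GraphData V) (μmin lam : ℝ) (hμmin : 0 < μmin)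
    (hμ : ∀ x, μmin ≤ g.μ x)
    (hconn : g.G.Connected) (a : V → ℝ) (ha : ∀ x, 0 ≤ a x) (x₀ : V)
    (hainf : ∀ M : ℝ, ∃ R : ℕ, ∀ x, R ≤ g.G.dist x x₀ → M ≤ a x)
    (hlam : 1 < lam)
    (u : ℕ → V → ℝ) (hmem : ∀ k, g.memE a lam (u k))
    (B : ℝ) (hB : ∀ k, g.enormSq a lam (u k) ≤ B) :
    ∃ φ : ℕ → ℕ, StrictMono φ ∧ ∃ w : V → ℝ, g.memE a lam w ∧
      (∀ x, Filter.Tendsto (fun k => u (φ k) x) Filter.atTop (nhds (w x)))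
      ∧ (∀ q : ℝ, 2 ≤ q →
          Filter.Tendsto (fun k => ∑' x, g.μ x * |u (φ k) x - w x| ^ q)
            Filter.atTop (nhds 0))
      ∧ Filter.Tendsto (fun k => ⨆ x, |u (φ k) x - w x|) Filter.atTop (nhds 0) := by
  have hlam0 : 0 < lam := by linarith
  have hfin := g.finite_neighborSet
  have := hconn.countable hfin x₀
  have hbound : ∀ k x, |u k x| ≤ √(B / μmin) := fun k =>
    g.abs_le_sqrt_div_of_enormSq_le hμmin hμ hlam0.le ha (hmem k) (hB k)
  obtain ⟨w, hwK, φ, hφ, hconv⟩ := (isCompact_univ_pi fun _ : V => isCompact_Icc).tendsto_subseq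
    fun k => Set.mem_univ_pi.2 fun x => abs_le.1 (hbound k x)
  have hw_bound : ∀ x, |w x| ≤ √(B / μmin) := fun x => abs_le.2 (Set.mem_univ_pi.1 hwK x)
  have hpt : ∀ x, Tendsto (fun k => u (φ k) x) atTop (𝓝 (w x)) := tendsto_pi_nhds.1 hconv
  have hw_le := g.sum_energyDensity_le_of_tendsto hlam0.le ha (fun k => hmem (φ k))
    (fun k => hB (φ k)) hconv
  have hwE : g.memE a lam w := summable_of_sum_le (g.energyDensity_nonneg hlam0.le ha w) hw_le
  have hsumm : ∀ k, Summable fun x => g.μ x * (u (φ k) x - w x) ^ 2 := fun k =>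
    g.summable_mul_sq_sub hlam0.le ha (hmem (φ k)) hwE
  have hL2 := g.tendsto_tsum_mul_sq_sub_zero hlam0 ha (hconn.tendsto_cofinite_atTop hfin x₀ hainf)
    (fun k => hmem (φ k)) (fun k => hB (φ k)) hw_le hpt
  refine ⟨φ, hφ, w, hwE, hpt, fun q hq => ?_,
    tendsto_iSup_abs_zero_of_tendsto_tsum_mul_sq hμmin hμ hsumm hL2⟩
  refine tendsto_tsum_mul_abs_rpow_zero_of_tendsto_tsum_mul_sq (K := 2 * √(B / μmin))
    (fun x => (g.μpos x).le) (fun k x => ?_) hq hsumm hL2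
  exact (abs_sub _ _).trans <| (add_le_add (hbound _ x) (hw_bound x)).trans_eq (two_mul _).symm

/-- compactness of the embedding E_λ ↪ L^q(V). -/
theorem stmt4 (g : GraphData V) (μmin C lam : ℝ) (hμmin : 0 < μmin)
    (hμ : ∀ x, μmin ≤ g.μ x) (hω : ∀ x, ∑' y, g.ω x y ≤ C)
    (hconn : g.G.Connected) (a : V → ℝ) (ha : ∀ x, 0 ≤ a x) (x₀ : V)
    (hainf : ∀ M : ℝ, ∃ R : ℕ, ∀ x, R ≤ g.G.dist x x₀ → M ≤ a x)
    (hlam : 1 < lam)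
    (u : ℕ → V → ℝ) (hmem : ∀ k, g.memE a lam (u k))
    (B : ℝ) (hB : ∀ k, g.enormSq a lam (u k) ≤ B) :
    ∃ φ : ℕ → ℕ, StrictMono φ ∧ ∃ w : V → ℝ, g.memE a lam w ∧
      (∀ x, Filter.Tendsto (fun k => u (φ k) x) Filter.atTop (nhds (w x)))
      ∧ (∀ q : ℝ, 2 ≤ q →
          Filter.Tendsto (fun k => ∑' x, g.μ x * |u (φ k) x - w x| ^ q)
            Filter.atTop (nhds 0))
      ∧ Filter.Tendsto (fun k => ⨆ x, |u (φ k) x - w x|) Filter.atTop (nhds 0) :=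
  stmt4_general g μmin lam hμmin hμ hconn a ha x₀ hainf hlam u hmem B hB
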